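/- Let n ≥ b ≥ 3 and α ∈ [0,1). Let G⋆ be a connected K_{1,b}-minor free graph on n vertices attaining the maximum A_α-spectral radius among all connected K_{1,b}-minor free graphs on n vertices, let x be the positive Perron eigenvector of A_α(G⋆) for λ_α(G⋆), and let v* be a vertex with maximum coordinate x_{v*}. Then the degree of v* in G⋆ equals b − 1, i.e., |N_{G⋆}(v*)| = b − 1. -/

import Mathlib

open scoped Classical


/-- `H` is a minor of `G` (branch-set / minor-model definition). -/
def SimpleGraph.IsMinor {W V : Type*} (H : SimpleGraph W) (G : SimpleGraph V) : Prop :=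
  ∃ f : W → Set V,
    (∀ w, (f w).Nonempty) ∧
    (∀ w, (G.induce (f w)).Connected) ∧
    (∀ w₁ w₂, w₁ ≠ w₂ → Disjoint (f w₁) (f w₂)) ∧
    (∀ w₁ w₂, H.Adj w₁ w₂ → ∃ v₁ ∈ f w₁, ∃ v₂ ∈ f w₂, G.Adj v₁ v₂)

/-- `G` has no `K_{a,b}`-minor. -/
def kabMinorFree (a b : ℕ) {V : Type*} (G : SimpleGraph V) : Prop :=
  ¬ (completeBipartiteGraph (Fin a) (Fin b)).IsMinor G

/-- The `A_α`-matrix `α·D(G) + (1-α)·A(G)` of a graph. -/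
noncomputable def aMatrix {V : Type*} [Fintype V] (G : SimpleGraph V) (α : ℝ) :
    Matrix V V ℝ :=
  Matrix.of fun u w =>
    (if u = w then α * ∑ z, (if G.Adj w z then (1 : ℝ) else 0) else 0)
    + (if G.Adj u w then (1 - α) else 0)

/-- The `A_α`-spectral radius: the largest eigenvalue of the `A_α`-matrix. -/
noncomputable def lambdaAlpha {V : Type*} [Fintype V] [DecidableEq V]
    (G : SimpleGraph V) (α : ℝ) : ℝ :=
  sSup (spectrum ℝ (aMatrix G α))


/-- `τ = ⌊(b+1)/(a+1)⌋`, the number of stars of the star forest `F_{a,b}`. -/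
def tauOf (a b : ℕ) : ℕ := (b + 1) / (a + 1)

/-- The star forest `F_{a,b}` on `b+1` vertices: the disjoint union of
`τ = ⌊(b+1)/(a+1)⌋` stars, `τ-1` of them isomorphic to `K_{1,a}` and one
isomorphic to `K_{1,c}` with `c = b - (a+1)(τ-1)`.  Vertex `i` belongs to the
block `min (i/(a+1)) (τ-1)`, first `τ-1` blocks of size `a+1`, whose first
vertex is the center of its star. -/
def starForest (a b : ℕ) : SimpleGraph (Fin (b + 1)) where
  Adj i j := i ≠ j ∧
    min ((i : ℕ) / (a + 1)) (tauOf a b - 1) = min ((j : ℕ) / (a + 1)) (tauOf a b - 1) ∧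
    ((i : ℕ) = min ((i : ℕ) / (a + 1)) (tauOf a b - 1) * (a + 1) ∨
     (j : ℕ) = min ((j : ℕ) / (a + 1)) (tauOf a b - 1) * (a + 1))
  symm := by
    constructor
    intro i j h
    exact ⟨h.1.symm, h.2.1.symm, h.2.2.symm⟩
  loopless := by constructor; intro i h; exact h.1 rfl

/-- `S^k(K_b)`: the complete graph `K_b` with one edge (between vertices `0`
and `1`) subdivided `k` times. -/
def subdividedComplete (b k : ℕ) : SimpleGraph (Fin b ⊕ Fin k) where
  Adj x y :=
    match x, y with
    | Sum.inl i, Sum.inl j =>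
        i ≠ j ∧ (k = 0 ∨ ¬(((i : ℕ) = 0 ∧ (j : ℕ) = 1) ∨ ((i : ℕ) = 1 ∧ (j : ℕ) = 0)))
    | Sum.inl i, Sum.inr p => ((i : ℕ) = 0 ∧ (p : ℕ) = 0) ∨ ((i : ℕ) = 1 ∧ (p : ℕ) = k - 1)
    | Sum.inr p, Sum.inl i => ((i : ℕ) = 0 ∧ (p : ℕ) = 0) ∨ ((i : ℕ) = 1 ∧ (p : ℕ) = k - 1)
    | Sum.inr p, Sum.inr q => (p : ℕ) + 1 = (q : ℕ) ∨ (q : ℕ) + 1 = (p : ℕ)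
  symm := by
    constructor
    rintro (i | p) (j | q) h
    · exact ⟨h.1.symm, by tauto⟩
    · exact h
    · exact h
    · tauto
  loopless := by
    constructor
    rintro (i | p) h
    · exact h.1 rfl
    · rcases h with h | h <;> omega

/-- The graph `F(a₁,a₂,a₃)`: a complete graph on `a₁+a₂+a₃ = b-1` vertices with
partition `V₁ ∪ V₂ ∪ V₃` (`|Vᵢ| = aᵢ`), together with a path `v₁v₂v₃` on three
new vertices, every vertex of `Vᵢ` joined to `vᵢ`. -/
def fGraph (a₁ a₂ a₃ : ℕ) : SimpleGraph (Fin (a₁ + a₂ + a₃) ⊕ Fin 3) where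
  Adj x y :=
    match x, y with
    | Sum.inl u, Sum.inl w => u ≠ w
    | Sum.inl u, Sum.inr i =>
        ((i : ℕ) = 0 ∧ (u : ℕ) < a₁) ∨
        ((i : ℕ) = 1 ∧ a₁ ≤ (u : ℕ) ∧ (u : ℕ) < a₁ + a₂) ∨
        ((i : ℕ) = 2 ∧ a₁ + a₂ ≤ (u : ℕ))
    | Sum.inr i, Sum.inl u =>
        ((i : ℕ) = 0 ∧ (u : ℕ) < a₁) ∨
        ((i : ℕ) = 1 ∧ a₁ ≤ (u : ℕ) ∧ (u : ℕ) < a₁ + a₂) ∨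
        ((i : ℕ) = 2 ∧ a₁ + a₂ ≤ (u : ℕ))
    | Sum.inr i, Sum.inr j => (i : ℕ) + 1 = (j : ℕ) ∨ (j : ℕ) + 1 = (i : ℕ)
  symm := by
    constructor
    rintro (u | i) (w | j) h
    · exact h.symm
    · exact h
    · exact h
    · tauto
  loopless := by
    constructor
    rintro (u | i) h
    · exact h rfl
    · rcases h with h | h <;> omega

/-- The Petersen graph: outer `5`-cycle, inner pentagram, five spokes. -/
def petersen : SimpleGraph (Fin 5 ⊕ Fin 5) where
  Adj x y :=
    match x, y with
    | Sum.inl i, Sum.inl j => (j : ℕ) = ((i : ℕ) + 1) % 5 ∨ (i : ℕ) = ((j : ℕ) + 1) % 5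
    | Sum.inl i, Sum.inr j => i = j
    | Sum.inr i, Sum.inl j => i = j
    | Sum.inr i, Sum.inr j => (j : ℕ) = ((i : ℕ) + 2) % 5 ∨ (i : ℕ) = ((j : ℕ) + 2) % 5
  symm := by
    constructor
    rintro (i | i) (j | j) h
    · tauto
    · exact h.symm
    · exact h.symm
    · tauto
  loopless := by
    constructor
    rintro (i | i) h <;>
      · have hi : (i : ℕ) < 5 := i.isLt
        rcases h with h | h <;> omega

/-- The join `G ∨ H` of two graphs. -/
def joinG {V W : Type*} (G : SimpleGraph V) (H : SimpleGraph W) : SimpleGraph (V ⊕ W) where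
  Adj x y :=
    match x, y with
    | Sum.inl u, Sum.inl w => G.Adj u w
    | Sum.inl _, Sum.inr _ => True
    | Sum.inr _, Sum.inl _ => True
    | Sum.inr u, Sum.inr w => H.Adj u w
  symm := by
    constructor
    rintro (u | u) (w | w) h
    · exact h.symm
    · trivial
    · trivial
    · exact h.symm
  loopless := by
    constructor
    rintro (u | u) h
    · exact G.loopless.irrefl u h
    · exact H.loopless.irrefl u h

/-- The disjoint union of two graphs. -/
def disjUnion {V W : Type*} (G : SimpleGraph V) (H : SimpleGraph W) : SimpleGraph (V ⊕ W) where
  Adj x y :=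
    match x, y with
    | Sum.inl u, Sum.inl w => G.Adj u w
    | Sum.inl _, Sum.inr _ => False
    | Sum.inr _, Sum.inl _ => False
    | Sum.inr u, Sum.inr w => H.Adj u w
  symm := by
    constructor
    rintro (u | u) (w | w) h
    · exact h.symm
    · exact h
    · exact h
    · exact h.symm
  loopless := by
    constructor
    rintro (u | u) h
    · exact G.loopless.irrefl u h
    · exact H.loopless.irrefl u h

/-- `k` disjoint copies of the graph `H`. -/
def copies (k : ℕ) {W : Type*} (H : SimpleGraph W) : SimpleGraph (Fin k × W) where
  Adj x y := x.1 = y.1 ∧ H.Adj x.2 y.2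
  symm := by constructor; rintro x y ⟨h1, h2⟩; exact ⟨h1.symm, h2.symm⟩
  loopless := by constructor; rintro x ⟨h1, h2⟩; exact H.loopless.irrefl _ h2

/-- `K_b^e`: the complete graph `K_b` with the edge between vertices `0` and
`1` removed and a pendant vertex attached to each of `0` and `1`. -/
def kbE (b : ℕ) : SimpleGraph (Fin b ⊕ Fin 2) where
  Adj x y :=
    match x, y with
    | Sum.inl i, Sum.inl j =>
        i ≠ j ∧ ¬(((i : ℕ) = 0 ∧ (j : ℕ) = 1) ∨ ((i : ℕ) = 1 ∧ (j : ℕ) = 0))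
    | Sum.inl i, Sum.inr p => (i : ℕ) = (p : ℕ)
    | Sum.inr p, Sum.inl i => (i : ℕ) = (p : ℕ)
    | Sum.inr _, Sum.inr _ => False
  symm := by
    constructor
    rintro (i | p) (j | q) h
    · exact ⟨h.1.symm, by tauto⟩
    · exact h
    · exact h
    · exact h
  loopless := by
    constructor
    rintro (i | p) h
    · exact h.1 rfl
    · exact h

/-- The number of neighbours of `v` lying in the set `F`. -/
noncomputable def degIn {V : Type*} (G : SimpleGraph V) (F : Set V) (v : V) : ℕ :=
  (G.neighborSet v ∩ F).ncard

/-- `F` is a union of (vertex sets of) connected components of `G - S`. -/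
def isComponentUnion {V : Type*} (G : SimpleGraph V) (S : Set V) (F : Set V) : Prop :=
  F ⊆ Sᶜ ∧ ∀ u v : ↥(Sᶜ : Set V), (G.induce Sᶜ).Reachable u v → (u : V) ∈ F → (v : V) ∈ F

/-- A graph has the `(a,b)`-property if it is `K_{r,s}`-minor free for all
positive `r, s` with `r + s = b + 1` and `r ≤ ω = min {a, ⌊(b+1)/2⌋}`. -/
def abProperty (a b : ℕ) {V : Type*} (G : SimpleGraph V) : Prop :=
  ∀ r s : ℕ, 0 < r → 0 < s → r + s = b + 1 → r ≤ min a ((b + 1) / 2) →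
    ¬ (completeBipartiteGraph (Fin r) (Fin s)).IsMinor G

/-!
A vertex of degree at least `b` spans a star `K_{1,b}`, so `G⋆` has maximum degree at most
`b - 1`. Conversely, at a vertex `v⋆` of maximal Perron entry the eigen-equation gives
`λ x_{v⋆} = α d(v⋆) x_{v⋆} + (1 - α) ∑_{u ∼ v⋆} x_u ≤ d(v⋆) x_{v⋆}`, so `λ_α(G⋆) ≤ d(v⋆)`.
The lollipop (a clique `K_{b-1}` with a pendant path) is connected and `K_{1,b}`-minor free,
and a Rayleigh quotient shows `λ_α > b - 2` for it; by extremality `d(v⋆) > b - 2`.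
-/

open Matrix

theorem Matrix.IsHermitian.dotProduct_mulVec_le_sSup_spectrum {ι : Type*} [Fintype ι]
    [DecidableEq ι] {A : Matrix ι ι ℝ} (hA : A.IsHermitian) (y : ι → ℝ) :
    y ⬝ᵥ (A *ᵥ y) ≤ sSup (spectrum ℝ A) * (y ⬝ᵥ y) := by
  open scoped MatrixOrder in
  have hle : A ≤ algebraMap ℝ (Matrix ι ι ℝ) (sSup (spectrum ℝ A)) :=
    le_algebraMap_of_spectrum_le (fun _ hx => le_csSup A.finite_real_spectrum.bddAbove hx) hA
  simpa [Algebra.algebraMap_eq_smul_one, sub_mulVec, smul_mulVec, dotProduct_sub] using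
    (Matrix.le_iff.1 hle).dotProduct_mulVec_nonneg y

namespace SimpleGraph

variable {V W : Type*} {G : SimpleGraph V} {H : SimpleGraph W}

theorem IsContained.isMinor (h : H ⊑ G) : H.IsMinor G := by
  obtain ⟨f⟩ := h
  refine ⟨fun w => {f w}, fun w => Set.singleton_nonempty _, fun w => ?_,
    fun w₁ w₂ hne => Set.disjoint_singleton.2 (f.injective.ne hne),
    fun w₁ w₂ hadj => ⟨f w₁, rfl, f w₂, rfl, f.toHom.map_adj hadj⟩⟩
  rw [induce_singleton_eq_top]
  exact connected_top

theorem completeBipartiteGraph_isContained_of_le_card_neighborSet {b : ℕ} (v : V)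
    [Fintype (G.neighborSet v)] (h : b ≤ Fintype.card (G.neighborSet v)) :
    completeBipartiteGraph (Fin 1) (Fin b) ⊑ G := by
  obtain ⟨e⟩ := Function.Embedding.nonempty_of_card_le (by simpa using h :
    Fintype.card (Fin b) ≤ Fintype.card (G.neighborSet v))
  refine ⟨⟨⟨Sum.elim (fun _ => v) (fun i => e i), ?_⟩, ?_⟩⟩
  · rintro (i | i) (j | j) hij <;> simp at hij
    · exact (e j).2
    · exact (e i).2.symm
  · rintro (i | i) (j | j) hij
    · rw [Subsingleton.elim i j]
    · exact absurd hij (G.ne_of_adj (e j).2)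
    · exact absurd hij.symm (G.ne_of_adj (e i).2)
    · simpa using e.injective (Subtype.ext hij)

theorem ncard_neighborSet_eq_degree [Fintype V] (v : V) :
    (G.neighborSet v).ncard = G.degree v := by
  rw [Set.ncard_eq_toFinset_card', Set.toFinset_card, card_neighborSet_eq_degree]

theorem degree_lt_of_kabMinorFree [Fintype V] {b : ℕ} (h : kabMinorFree 1 b G) (v : V) :
    G.degree v < b := by
  by_contra! hle
  rw [← card_neighborSet_eq_degree] at hle
  exact h (completeBipartiteGraph_isContained_of_le_card_neighborSet v hle).isMinor

theorem IsMinor.exists_boundary_of_completeBipartiteGraph {ι : Type*}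
    (h : (completeBipartiteGraph (Fin 1) ι).IsMinor G) :
    ∃ C : Set V, (G.induce C).Preconnected ∧ ∃ w : ι → V, Function.Injective w ∧
      ∀ i, w i ∉ C ∧ ∃ c ∈ C, G.Adj c (w i) := by
  obtain ⟨f, -, hconn, hdisj, hadj⟩ := h
  have hstar : ∀ i, ∃ c ∈ f (.inl 0), ∃ w ∈ f (.inr i), G.Adj c w := fun i =>
    hadj _ _ (by simp)
  choose c hc w hw hcw using hstar
  refine ⟨f (.inl 0), (hconn _).preconnected, w, fun i j hij => ?_, fun i =>
    ⟨fun hi => (hdisj _ _ (by simp)).le_bot ⟨hi, hw i⟩, c i, hc i, hcw i⟩⟩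
  by_contra hne
  exact (hdisj (.inr i) (.inr j) (by simpa using hne)).le_bot ⟨hw i, hij ▸ hw j⟩

section AlphaMatrix

variable [Fintype V] [DecidableEq V] (G)

theorem aMatrix_eq_adjMatrix_add_smul_lapMatrix (α : ℝ) :
    aMatrix G α = G.adjMatrix ℝ + α • G.lapMatrix ℝ := by
  ext u w
  have hdeg : ∑ z, (if G.Adj w z then (1 : ℝ) else 0) = G.degree w := by
    rw [Finset.sum_boole, ← card_neighborFinset_eq_degree, neighborFinset_eq_filter]
  by_cases huw : u = w
  · subst huw
    rw [aMatrix, of_apply, if_pos rfl, hdeg]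
    simp [lapMatrix, degMatrix]
  · by_cases h : G.Adj u w <;> simp [aMatrix, lapMatrix, degMatrix, huw, h, sub_eq_add_neg]

theorem isHermitian_aMatrix (α : ℝ) : (aMatrix G α).IsHermitian := by
  rw [aMatrix_eq_adjMatrix_add_smul_lapMatrix, isHermitian_iff_isSymm]
  exact G.isSymm_adjMatrix.add ((G.isSymm_lapMatrix ℝ).smul α)

theorem aMatrix_mulVec_apply (α : ℝ) (x : V → ℝ) (v : V) :
    (aMatrix G α *ᵥ x) v = α * G.degree v * x v + (1 - α) * ∑ u ∈ G.neighborFinset v, x u := by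
  rw [aMatrix_eq_adjMatrix_add_smul_lapMatrix, add_mulVec, smul_mulVec, Pi.add_apply,
    Pi.smul_apply, adjMatrix_mulVec_apply, lapMatrix_mulVec_apply, smul_eq_mul]
  ring

theorem dotProduct_adjMatrix_mulVec_le_lambdaAlpha_mul {α : ℝ} (hα : 0 ≤ α) (y : V → ℝ) :
    y ⬝ᵥ (G.adjMatrix ℝ *ᵥ y) ≤ lambdaAlpha G α * (y ⬝ᵥ y) := by
  have hlap := (G.posSemidef_lapMatrix ℝ).dotProduct_mulVec_nonneg y
  have hquad : y ⬝ᵥ (aMatrix G α *ᵥ y) =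
      y ⬝ᵥ (G.adjMatrix ℝ *ᵥ y) + α * (y ⬝ᵥ (G.lapMatrix ℝ *ᵥ y)) := by
    rw [aMatrix_eq_adjMatrix_add_smul_lapMatrix, add_mulVec, smul_mulVec, dotProduct_add,
      dotProduct_smul, smul_eq_mul]
  simp only [star_trivial] at hlap
  have := (isHermitian_aMatrix G α).dotProduct_mulVec_le_sSup_spectrum y
  rw [lambdaAlpha]
  nlinarith

theorem le_degree_of_aMatrix_mulVec_eq_smul {α μ : ℝ} (hα : α ≤ 1) {x : V → ℝ}
    (hx : aMatrix G α *ᵥ x = μ • x) {v : V} (hv : 0 < x v) (hmax : ∀ u, x u ≤ x v) :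
    μ ≤ G.degree v := by
  have hv_eq := congrFun hx v
  rw [aMatrix_mulVec_apply, Pi.smul_apply, smul_eq_mul] at hv_eq
  have hsum : ∑ u ∈ G.neighborFinset v, x u ≤ G.degree v * x v := by
    simpa [card_neighborFinset_eq_degree] using
      Finset.sum_le_card_nsmul (G.neighborFinset v) x (x v) fun u _ => hmax u
  refine le_of_mul_le_mul_right ?_ hv
  nlinarith

end AlphaMatrix

end SimpleGraph

/-- The clique on `{0, …, b - 2}` together with the path `b - 2, b - 1, …, n - 1`. -/
def lollipop (n b : ℕ) : SimpleGraph (Fin n) where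
  Adj i j := i ≠ j ∧ ((i : ℕ) < b - 1 ∧ (j : ℕ) < b - 1 ∨
    (i : ℕ) + 1 = j ∧ b - 1 ≤ (j : ℕ) ∨ (j : ℕ) + 1 = i ∧ b - 1 ≤ (i : ℕ))
  symm := ⟨fun _ _ h => ⟨h.1.symm, by tauto⟩⟩
  loopless := ⟨fun _ h => h.1 rfl⟩

section Lollipop

variable {n b : ℕ}

theorem lollipop_adj {i j : Fin n} : (lollipop n b).Adj i j ↔ i ≠ j ∧
    ((i : ℕ) < b - 1 ∧ (j : ℕ) < b - 1 ∨
      (i : ℕ) + 1 = j ∧ b - 1 ≤ (j : ℕ) ∨ (j : ℕ) + 1 = i ∧ b - 1 ≤ (i : ℕ)) :=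
  Iff.rfl

theorem lollipop_adj_succ_or_pred {i j : Fin n} (h : (lollipop n b).Adj i j)
    (hi : b - 1 ≤ (i : ℕ)) : (i : ℕ) + 1 = j ∨ (j : ℕ) + 1 = i := by
  rw [lollipop_adj] at h
  omega

theorem connected_lollipop (hn : 0 < n) : (lollipop n b).Connected := by
  have hreach : ∀ m (hm : m < n), (lollipop n b).Reachable ⟨0, hn⟩ ⟨m, hm⟩ := by
    intro m
    induction m with
    | zero => exact fun _ => .rfl
    | succ m ih =>
      intro hm
      by_cases hclique : m + 1 < b - 1
      · exact SimpleGraph.Adj.reachable ⟨by simp [Fin.ext_iff], by simp; omega⟩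
      · exact (ih (by omega)).trans
          (SimpleGraph.Adj.reachable ⟨by simp [Fin.ext_iff], by simp; omega⟩)
  have : Nonempty (Fin n) := ⟨⟨0, hn⟩⟩
  exact ⟨fun u v => (hreach u u.2).symm.trans (hreach v v.2)⟩

theorem lollipop_mem_of_lt_of_lt {C : Set (Fin n)}
    (hC : ((lollipop n b).induce C).Preconnected) {t u v : Fin n} (ht : b - 1 ≤ (t : ℕ))
    (hu : u ∈ C) (hv : v ∈ C) (hut : u < t) (htv : t < v) : t ∈ C := by
  obtain ⟨W⟩ := hC ⟨v, hv⟩ ⟨u, hu⟩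
  suffices ∀ {x y : C}, ((lollipop n b).induce C).Walk x y →
      (t : ℕ) < (x : Fin n) → ((y : Fin n) : ℕ) < t → t ∈ C from
    this W (Fin.lt_def.1 htv) (Fin.lt_def.1 hut)
  intro x y W
  induction W with
  | nil => intro h₁ h₂; omega
  | @cons x z y hxz _ ih =>
    intro hx hy
    by_cases hzt : (z : Fin n) = t
    · exact hzt ▸ z.2
    · have := lollipop_adj_succ_or_pred (show (lollipop n b).Adj x z from hxz) (by omega)
      exact ih (by have := Fin.val_ne_of_ne hzt; omega) hy

theorem lollipop_forall_lt_or_forall_gt {C : Set (Fin n)}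
    (hC : ((lollipop n b).induce C).Preconnected) {t : Fin n} (ht : b - 1 ≤ (t : ℕ))
    (htC : t ∉ C) : (∀ u ∈ C, u < t) ∨ ∀ u ∈ C, t < u := by
  by_contra! h
  obtain ⟨⟨u, hu, htu⟩, ⟨v, hv, hvt⟩⟩ := h
  have hut : u ≠ t := fun h => htC (h ▸ hu)
  have hvt' : v ≠ t := fun h => htC (h ▸ hv)
  exact htC (lollipop_mem_of_lt_of_lt hC ht hv hu (lt_of_le_of_ne hvt hvt')
    (lt_of_le_of_ne htu hut.symm))

variable {ι : Type*} [Fintype ι] {C : Set (Fin n)} {w : ι → Fin n}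

/-- When `C` meets the clique, the only neighbour of `C` on the path is the successor of its
largest vertex, so the boundary of `C` injects into the clique. -/
theorem card_le_of_lollipop_boundary_of_mem_clique
    (hC : ((lollipop n b).induce C).Preconnected) {k : Fin n} (hk : k ∈ C)
    (hkb : (k : ℕ) < b - 1) (hw : Function.Injective w)
    (hbd : ∀ i, w i ∉ C ∧ ∃ c ∈ C, (lollipop n b).Adj c (w i)) :
    Fintype.card ι ≤ b - 1 := by
  have hpath_le : ∀ i j, b - 1 ≤ (w i : ℕ) → b - 1 ≤ (w j : ℕ) → (w i : ℕ) ≤ w j := by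
    intro i j hi hj
    obtain ⟨-, c, hc, hcw⟩ := hbd i
    have hbelow : ∀ u ∈ C, u < w j :=
      (lollipop_forall_lt_or_forall_gt hC hj (hbd j).1).resolve_right
        fun h => absurd (Fin.lt_def.1 (h k hk)) (by omega)
    have := Fin.lt_def.1 (hbelow c hc)
    have := lollipop_adj_succ_or_pred hcw.symm hi
    omega
  let φ : ι → Fin (b - 1) := fun i => if h : (w i : ℕ) < b - 1 then ⟨w i, h⟩ else ⟨k, hkb⟩
  have hφ : Function.Injective φ := by
    intro i j hij
    apply hw
    simp only [φ] at hij
    split_ifs at hij with hi hj hj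
    · exact Fin.ext (Fin.mk.inj hij)
    · exact absurd (Fin.ext (Fin.mk.inj hij) ▸ hk) (hbd i).1
    · exact absurd (Fin.ext (Fin.mk.inj hij).symm ▸ hk) (hbd j).1
    · exact Fin.ext (le_antisymm (hpath_le i j (by omega) (by omega))
        (hpath_le j i (by omega) (by omega)))
  simpa using Fintype.card_le_of_injective φ hφ

/-- When `C` lies on the path, its boundary consists of the vertices just above and just below. -/
theorem card_le_two_of_lollipop_boundary_of_subset_path
    (hC : ((lollipop n b).induce C).Preconnected) (hCpath : ∀ u ∈ C, b - 1 ≤ (u : ℕ))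
    (hw : Function.Injective w) (hbd : ∀ i, w i ∉ C ∧ ∃ c ∈ C, (lollipop n b).Adj c (w i)) :
    Fintype.card ι ≤ 2 := by
  have hside : ∀ i, (∀ u ∈ C, u < w i) ∨ ∀ u ∈ C, w i < u := by
    intro i
    by_cases hi : b - 1 ≤ (w i : ℕ)
    · exact lollipop_forall_lt_or_forall_gt hC hi (hbd i).1
    · exact .inr fun u hu => Fin.lt_def.2 (by have := hCpath u hu; omega)
  have hupper : ∀ i j, (∀ u ∈ C, u < w i) → (∀ u ∈ C, u < w j) → (w i : ℕ) ≤ w j := by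
    intro i j hi hj
    obtain ⟨-, c, hc, hcw⟩ := hbd i
    have := lollipop_adj_succ_or_pred hcw (hCpath c hc)
    have := Fin.lt_def.1 (hi c hc)
    have := Fin.lt_def.1 (hj c hc)
    omega
  have hlower : ∀ i j, (∀ u ∈ C, w i < u) → (∀ u ∈ C, w j < u) → (w i : ℕ) ≤ w j := by
    intro i j hi hj
    obtain ⟨-, c, hc, hcw⟩ := hbd j
    have := lollipop_adj_succ_or_pred hcw (hCpath c hc)
    have := Fin.lt_def.1 (hi c hc)
    have := Fin.lt_def.1 (hj c hc)
    omega
  have hφ : Function.Injective fun i => decide (∀ u ∈ C, u < w i) := by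
    intro i j hij
    apply hw
    simp only [decide_eq_decide] at hij
    rcases hside i with hi | hi
    · have hj := hij.1 hi
      exact Fin.ext (le_antisymm (hupper i j hi hj) (hupper j i hj hi))
    · have hi' : ¬ ∀ u ∈ C, u < w i := fun h => by
        obtain ⟨-, c, hc, -⟩ := hbd i
        exact lt_asymm (h c hc) (hi c hc)
      have hj := (hside j).resolve_left (mt hij.2 hi')
      exact Fin.ext (le_antisymm (hlower i j hi hj) (hlower j i hj hi))
  simpa using Fintype.card_le_of_injective _ hφ

theorem kabMinorFree_lollipop (hb : 3 ≤ b) : kabMinorFree 1 b (lollipop n b) := by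
  intro h
  obtain ⟨C, hC, w, hw, hbd⟩ := h.exists_boundary_of_completeBipartiteGraph
  by_cases hK : ∃ k ∈ C, (k : ℕ) < b - 1
  · obtain ⟨k, hk, hkb⟩ := hK
    have := card_le_of_lollipop_boundary_of_mem_clique hC hk hkb hw hbd
    rw [Fintype.card_fin] at this
    omega
  · push Not at hK
    have := card_le_two_of_lollipop_boundary_of_subset_path hC hK hw hbd
    rw [Fintype.card_fin] at this
    omega

theorem sub_two_lt_lambdaAlpha_lollipop (hb : 3 ≤ b) (hn : b ≤ n) {α : ℝ} (hα : 0 ≤ α) :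
    (b : ℝ) - 2 < lambdaAlpha (lollipop n b) α := by
  set p : Fin n := ⟨b - 1, by omega⟩
  set q : Fin n := ⟨b - 2, by omega⟩
  set ε : ℝ := 1 / b
  have hε : 0 < ε := by positivity
  set y : Fin n → ℝ := fun i => if (i : ℕ) < b - 1 then 1 else if i = p then ε else 0
  have hyy : y ⬝ᵥ y = (b - 1) + ε ^ 2 := by
    have hsq : ∀ i, y i * y i =
        (if (i : ℕ) < b - 1 then 1 else 0) + if i = p then ε ^ 2 else 0 := by
      intro i
      simp only [y, p, Fin.ext_iff]
      split_ifs <;> first | omega | ring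
    simp only [dotProduct, hsq, Finset.sum_add_distrib]
    simp [Fin.card_filter_val_lt, min_eq_right (show b - 1 ≤ n by omega),
      Nat.cast_sub (show 1 ≤ b by omega)]
  have hyAy : ((b : ℝ) - 1) * (b - 2) + 2 * ε ≤ y ⬝ᵥ ((lollipop n b).adjMatrix ℝ *ᵥ y) := by
    have hpt : ∀ i j : Fin n, (if (i : ℕ) < b - 1 ∧ (j : ℕ) < b - 1 then (1 : ℝ) else 0)
        - (if i = j ∧ (i : ℕ) < b - 1 then 1 else 0) + (if i = q ∧ j = p then ε else 0)
        + (if i = p ∧ j = q then ε else 0) ≤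
        if (lollipop n b).Adj i j then y i * y j else 0 := by
      intro i j
      simp only [lollipop_adj, y, p, q, Fin.ext_iff]
      split_ifs <;> first | omega | nlinarith
    rw [SimpleGraph.dotProduct_mulVec_adjMatrix]
    refine le_trans (le_of_eq ?_)
      (Finset.sum_le_sum fun i _ => Finset.sum_le_sum fun j _ => hpt i j)
    simp only [Finset.sum_add_distrib, Finset.sum_sub_distrib, ite_and]
    simp [Finset.sum_ite, Fin.card_filter_val_lt, min_eq_right (show b - 1 ≤ n by omega),
      Nat.cast_sub (show 1 ≤ b by omega)]
    ring
  have hbound := (lollipop n b).dotProduct_adjMatrix_mulVec_le_lambdaAlpha_mul hα y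
  have hb' : (3 : ℝ) ≤ b := by exact_mod_cast hb
  have hεb : (b : ℝ) * ε = 1 := mul_one_div_cancel (by positivity)
  rw [hyy] at hbound
  -- `(b - 2) (b - 1 + ε²) < (b - 1) (b - 2) + 2ε` because `(b - 2) ε < 2`
  nlinarith

end Lollipop

theorem extremal_K1b_max_perron_vertex_degree_general
    (n b : ℕ) (hn : b ≤ n) (hb : 3 ≤ b)
    (α : ℝ) (hα0 : 0 ≤ α) (hα1 : α < 1)
    (G : SimpleGraph (Fin n)) (hfree : kabMinorFree 1 b G)
    (hmax : ∀ H : SimpleGraph (Fin n), H.Connected → kabMinorFree 1 b H →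
      lambdaAlpha H α ≤ lambdaAlpha G α)
    (x : Fin n → ℝ) (hx : ∀ v, 0 < x v)
    (heig : (aMatrix G α).mulVec x = lambdaAlpha G α • x)
    (vstar : Fin n) (hvstar : ∀ u, x u ≤ x vstar) :
    (G.neighborSet vstar).ncard = b - 1 := by
  have hdeg_lt : G.degree vstar < b := G.degree_lt_of_kabMinorFree hfree vstar
  have hlambda_le : lambdaAlpha G α ≤ G.degree vstar :=
    G.le_degree_of_aMatrix_mulVec_eq_smul hα1.le heig (hx vstar) hvstar
  have hlollipop : (b : ℝ) - 2 < lambdaAlpha G α :=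
    (sub_two_lt_lambdaAlpha_lollipop hb hn hα0).trans_le
      (hmax _ (connected_lollipop (by omega)) (kabMinorFree_lollipop hb))
  have hdeg_gt : b < G.degree vstar + 2 := by
    exact_mod_cast (by linarith : (b : ℝ) < G.degree vstar + 2)
  rw [G.ncard_neighborSet_eq_degree]
  omega

/-- In an `A_α`-extremal connected `K_{1,b}`-minor free graph on `n ≥ b ≥ 3`
vertices, a vertex of maximal Perron entry has degree exactly `b - 1`. -/
theorem extremal_K1b_max_perron_vertex_degree
    (n b : ℕ) (hn : b ≤ n) (hb : 3 ≤ b)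
    (α : ℝ) (hα0 : 0 ≤ α) (hα1 : α < 1)
    (G : SimpleGraph (Fin n)) (hconn : G.Connected) (hfree : kabMinorFree 1 b G)
    (hmax : ∀ H : SimpleGraph (Fin n), H.Connected → kabMinorFree 1 b H →
      lambdaAlpha H α ≤ lambdaAlpha G α)
    (x : Fin n → ℝ) (hx : ∀ v, 0 < x v)
    (heig : (aMatrix G α).mulVec x = lambdaAlpha G α • x)
    (vstar : Fin n) (hvstar : ∀ u, x u ≤ x vstar) :
    (G.neighborSet vstar).ncard = b - 1 :=
  extremal_K1b_max_perron_vertex_degree_general n b hn hb α hα0 hα1 G hfree hmax x hx heig vstar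
    hvstar
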